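/- arXiv:2002.02428 — 5 statements merged into one kernel-verified Lean document; each statement's English description precedes it below -/
import Mathlib

section
/- Let ω ∈ ℝ² with ‖ω‖ < 1, and let z ∈ S¹. The line through z and ω intersects the unit circle in exactly two points: z itself and the point -h_ω(z), where h_ω(z) = ((1-‖ω‖²)/‖z-ω‖²)(z-ω) - ω. In particular, -h_ω(z) lies on the line through z and ω, lies on the unit circle, and is distinct from z. -/
open Real Set

theorem aux_expand (ω z : EuclideanSpace ℝ (Fin 2)) (hz : ‖z‖ = 1) (t : ℝ) :
    ‖z + t • (ω - z)‖ ^ 2 =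
      1 + 2 * t * ((inner ℝ z ω : ℝ) - 1) + t ^ 2 * ‖ω - z‖ ^ 2 := by
  rw [@norm_add_sq_real, inner_smul_right, inner_sub_right,
    real_inner_self_eq_norm_sq, norm_smul, hz]
  simp [mul_pow, sq_abs]
  ring

/-- The line through `z ∈ S¹` and `ω` (with `‖ω‖ < 1`) intersects the unit circle in
exactly two points: `z` itself and `-h_ω(z)`, where
`h_ω(z) = ((1-‖ω‖²)/‖z-ω‖²)(z-ω) - ω`. -/
theorem line_intersects_circle_at_neg_mobius
    (ω : EuclideanSpace ℝ (Fin 2)) (hω : ‖ω‖ < 1)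
    (z : EuclideanSpace ℝ (Fin 2)) (hz : ‖z‖ = 1) :
    (-(((1 - ‖ω‖ ^ 2) / ‖z - ω‖ ^ 2) • (z - ω) - ω)
        ∈ {w : EuclideanSpace ℝ (Fin 2) | ∃ t : ℝ, w = z + t • (ω - z)}) ∧
    ‖-(((1 - ‖ω‖ ^ 2) / ‖z - ω‖ ^ 2) • (z - ω) - ω)‖ = 1 ∧
    -(((1 - ‖ω‖ ^ 2) / ‖z - ω‖ ^ 2) • (z - ω) - ω) ≠ z ∧
    (∀ w : EuclideanSpace ℝ (Fin 2),
      (∃ t : ℝ, w = z + t • (ω - z)) → ‖w‖ = 1 →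
        w = z ∨ w = -(((1 - ‖ω‖ ^ 2) / ‖z - ω‖ ^ 2) • (z - ω) - ω)) := by
  have hzω : z - ω ≠ 0 := by
    intro h
    have : z = ω := sub_eq_zero.mp h
    rw [this] at hz; linarith
  set s : ℝ := ‖z - ω‖ ^ 2 with hs
  have hs0 : 0 < s := by
    have := norm_pos_iff.mpr hzω
    positivity
  set k : ℝ := 1 - ‖ω‖ ^ 2 with hk
  have hk0 : 0 < k := by nlinarith [norm_nonneg ω]
  set c : ℝ := k / s with hc
  have hcs : c * s = k := div_mul_cancel₀ k hs0.ne'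
  have hc0 : 0 < c := div_pos hk0 hs0
  -- the inner product relation
  have hinner : (inner ℝ z ω : ℝ) - 1 = (‖ω‖ ^ 2 - 1 - s) / 2 := by
    have : s = ‖z‖ ^ 2 - 2 * (inner ℝ z ω : ℝ) + ‖ω‖ ^ 2 := by
      rw [hs, @norm_sub_sq_real]
    rw [hz] at this
    linarith
  have hnormrev : ‖ω - z‖ ^ 2 = s := by rw [hs, norm_sub_rev]
  -- candidate point as a point on the line
  have hpt : -(c • (z - ω) - ω) = z + (1 + c) • (ω - z) := by
    have h1 : ((1 + c) : ℝ) • (ω - z) = (ω - z) + c • (ω - z) := by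
      rw [add_smul, one_smul]
    rw [h1]
    have h2 : c • (ω - z) = -(c • (z - ω)) := by
      rw [← smul_neg, neg_sub]
    rw [h2]
    abel
  -- norm formula for points on the line
  have key : ∀ t : ℝ, ‖z + t • (ω - z)‖ ^ 2 = 1 - t * (k + s) + t ^ 2 * s := by
    intro t
    rw [aux_expand ω z hz t, hinner, hnormrev]
    ring
  have hsq1 : ‖z + (1 + c) • (ω - z)‖ ^ 2 = 1 := by
    rw [key]
    nlinarith [hcs]
  refine ⟨⟨1 + c, by rw [hpt]⟩, ?_, ?_, ?_⟩
  · rw [hpt]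
    nlinarith [norm_nonneg (z + (1 + c) • (ω - z)), hsq1]
  · rw [hpt]
    intro h
    have h2 : (1 + c) • (ω - z) = 0 := by
      have := congrArg (· - z) h
      simpa [add_sub_cancel_left] using this
    rcases smul_eq_zero.mp h2 with h3 | h3
    · linarith
    · exact hzω (by rw [← neg_sub ω z, h3, neg_zero])
  · rintro w ⟨t, rfl⟩ hw
    have hw2 : 1 - t * (k + s) + t ^ 2 * s = 1 := by
      rw [← key t, hw]; norm_num
    have : t * (t * s - (k + s)) = 0 := by nlinarith
    rcases mul_eq_zero.mp this with h | h
    · left; simp [h]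
    · right
      rw [hpt]
      have ht : t = 1 + c := by
        have : t * s = k + s := by linarith
        field_simp [hc]
        nlinarith [this]
      rw [ht]
end

section
/- For α > 0 and β ∈ ℝ, the derivative of the NCP transformation f(θ) = 2·arctan(α·tan(θ/2 − π/2) + β) + π is given by f'(θ) = [((1+β²)/α)·sin²(θ/2) + α·cos²(θ/2) − β·sin θ]⁻¹ for all θ ∈ (0, 2π). -/
open Real Set

/-- The derivative of the NCP transformation
`f(θ) = 2 arctan(α tan(θ/2 − π/2) + β) + π` on `(0, 2π)`. -/
theorem ncp_hasDerivAt (α β : ℝ) (hα : 0 < α) :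
    ∀ θ ∈ Ioo (0 : ℝ) (2 * π),
      HasDerivAt (fun θ => 2 * arctan (α * tan (θ / 2 - π / 2) + β) + π)
        (((1 + β ^ 2) / α * sin (θ / 2) ^ 2 + α * cos (θ / 2) ^ 2
            - β * sin θ)⁻¹) θ := by
  intro θ hθ
  obtain ⟨h0, h2⟩ := hθ
  set u := θ / 2 - π / 2 with hu
  have hcpos : 0 < Real.cos u := by
    apply Real.cos_pos_of_mem_Ioo
    constructor <;> [skip; skip] <;> simp only [hu] <;> linarith
  have hc : Real.cos u ≠ 0 := ne_of_gt hcpos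
  set x := α * Real.tan u + β with hx
  have h1 : HasDerivAt (fun θ : ℝ => θ / 2 - π / 2) (1 / 2) θ := by
    simpa using ((hasDerivAt_id θ).div_const 2).sub_const (π / 2)
  have h2t : HasDerivAt Real.tan (1 / Real.cos u ^ 2) u := Real.hasDerivAt_tan hc
  have h3 : HasDerivAt (fun θ : ℝ => α * Real.tan (θ / 2 - π / 2) + β)
      (α * (1 / Real.cos u ^ 2 * (1 / 2))) θ := by
    have h4 := h2t.comp θ h1
    exact (h4.const_mul α).add_const β
  have h5 : HasDerivAt (fun θ : ℝ => 2 * Real.arctan (α * Real.tan (θ / 2 - π / 2) + β) + π)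
      (2 * (1 / (1 + x ^ 2) * (α * (1 / Real.cos u ^ 2 * (1 / 2))))) θ := by
    have h6 := (Real.hasDerivAt_arctan x).comp θ h3
    exact (h6.const_mul 2).add_const π
  convert h5 using 1
  have hθ2 : θ / 2 = u + π / 2 := by rw [hu]; ring
  have hsin : Real.sin (θ / 2) = Real.cos u := by rw [hθ2, Real.sin_add_pi_div_two]
  have hcos : Real.cos (θ / 2) = -Real.sin u := by rw [hθ2, Real.cos_add_pi_div_two]
  have hsinθ : Real.sin θ = 2 * Real.sin (θ / 2) * Real.cos (θ / 2) := by
    rw [← Real.sin_two_mul]; ring_nf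
  have hx2 : 1 + x ^ 2 ≠ 0 := by positivity
  symm
  apply eq_inv_of_mul_eq_one_left
  rw [hsinθ, hsin, hcos, hx, Real.tan_eq_sin_div_cos]
  have hpyth : Real.sin u ^ 2 + Real.cos u ^ 2 = 1 := Real.sin_sq_add_cos_sq u
  field_simp
  nlinarith [hpyth, sq_nonneg (Real.sin u), sq_nonneg (Real.cos u)]
end

section
/- For D ≥ 2, the ambient Jacobian J of the map T_{c→s}(z, r) = (√(1−r²)·z, r) : ℝ^D × (−1,1) → ℝ^{D+1}, evaluated at the point (z, r) = ((1,0,...,0), r) on the cylinder with tangent frame E given by the standard basis vectors e_2, ..., e_{D+1} of ℝ^{D+1}, satisfies det((JE)ᵀ(JE)) = (1−r²)^{D−2}. -/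
open Real Set

/-- The cylinder-to-sphere map `T_{c→s}` viewed as a map of the ambient space
`ℝ^D × ℝ ≅ ℝ^{D+1}`, with the last coordinate playing the role of the height `r`:
`T(x) = (√(1 − x_{D+1}²)·x_{1:D}, x_{D+1})`. -/
noncomputable def cylToSphereAmbient (D : ℕ) (x : EuclideanSpace ℝ (Fin (D + 1))) :
    EuclideanSpace ℝ (Fin (D + 1)) :=
  WithLp.toLp 2 (fun i => if i = Fin.last D then x (Fin.last D)
    else Real.sqrt (1 - x (Fin.last D) ^ 2) * x i : Fin (D + 1) → ℝ)

private lemma cylToSphere_fderiv_apply (D : ℕ) (hD : 2 ≤ D) (r : ℝ) (hr : r ∈ Ioo (-1 : ℝ) 1)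
    (v : EuclideanSpace ℝ (Fin (D+1))) (i : Fin (D+1)) :
    fderiv ℝ (cylToSphereAmbient D)
      (WithLp.toLp 2 ((fun i => if i = (0 : Fin (D + 1)) then (1 : ℝ)
          else if i = Fin.last D then r else 0) : Fin (D + 1) → ℝ)) v i =
    if i = Fin.last D then v (Fin.last D)
    else Real.sqrt (1 - r ^ 2) * v i +
      (if i = (0 : Fin (D+1)) then (1:ℝ) else 0) * (-(r / Real.sqrt (1 - r ^ 2)) * v (Fin.last D)) := by
  obtain ⟨hr1, hr2⟩ := hr
  have hq : (0:ℝ) < 1 - r ^ 2 := by nlinarith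
  have hqne : (1:ℝ) - r ^ 2 ≠ 0 := ne_of_gt hq
  set p : EuclideanSpace ℝ (Fin (D + 1)) :=
    WithLp.toLp 2 ((fun i => if i = (0 : Fin (D + 1)) then (1 : ℝ)
          else if i = Fin.last D then r else 0) : Fin (D + 1) → ℝ) with hp
  have hlast0 : (Fin.last D) ≠ (0 : Fin (D+1)) := by
    simp [Fin.ext_iff]
    omega
  have hpval : ∀ k : Fin (D+1), p k = if k = 0 then (1:ℝ) else if k = Fin.last D then r else 0 :=
    fun k => rfl
  have hplast : p (Fin.last D) = r := by rw [hpval]; simp [hlast0]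
  set s := Real.sqrt (1 - r ^ 2) with hs
  set c := -(r / s) with hc
  have hd2 : HasDerivAt (fun t : ℝ => Real.sqrt (1 - t ^ 2)) c r := by
    have hd1 : HasDerivAt (fun t : ℝ => 1 - t ^ 2) (-(2 * r ^ 1)) r := by
      simpa using (hasDerivAt_pow 2 r).const_sub 1
    have := (Real.hasDerivAt_sqrt hqne).comp r hd1
    refine this.congr_deriv ?_
    symm
    rw [hc, hs]
    field_simp
  have hproj : ∀ k : Fin (D+1), HasFDerivAt (fun x : EuclideanSpace ℝ (Fin (D+1)) => x k)
      (EuclideanSpace.proj (𝕜 := ℝ) k) p := fun k =>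
    (EuclideanSpace.proj (𝕜 := ℝ) (ι := Fin (D+1)) k).hasFDerivAt
  have hsqrtF : HasFDerivAt (fun x : EuclideanSpace ℝ (Fin (D+1)) =>
      Real.sqrt (1 - (x (Fin.last D)) ^ 2)) (c • EuclideanSpace.proj (𝕜 := ℝ) (Fin.last D)) p := by
    rw [← hplast] at hd2
    have := hd2.comp_hasFDerivAt p (hproj (Fin.last D))
    exact this
  -- per-coordinate derivatives
  set L : Fin (D+1) → (EuclideanSpace ℝ (Fin (D+1)) →L[ℝ] ℝ) := fun k =>
    if k = Fin.last D then EuclideanSpace.proj (𝕜 := ℝ) (Fin.last D)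
    else s • EuclideanSpace.proj (𝕜 := ℝ) k + p k • (c • EuclideanSpace.proj (𝕜 := ℝ) (Fin.last D)) with hL
  have hcoord : ∀ k : Fin (D+1), HasFDerivAt (fun x : EuclideanSpace ℝ (Fin (D+1)) =>
      (if k = Fin.last D then x (Fin.last D) else Real.sqrt (1 - x (Fin.last D) ^ 2) * x k))
      (L k) p := by
    intro k
    by_cases hk : k = Fin.last D
    · simpa [hL, hk] using hproj (Fin.last D)
    · have := hsqrtF.mul (hproj k)
      simp only [hL, if_neg hk]
      exact this.congr_fderiv (by rw [hplast, ← hs])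
  have hFpi : HasFDerivAt (fun x : EuclideanSpace ℝ (Fin (D+1)) =>
      (fun k => if k = Fin.last D then x (Fin.last D)
        else Real.sqrt (1 - x (Fin.last D) ^ 2) * x k : Fin (D+1) → ℝ))
      (ContinuousLinearMap.pi L) p := hasFDerivAt_pi.2 hcoord
  have hF : HasFDerivAt (cylToSphereAmbient D)
      (((PiLp.continuousLinearEquiv 2 ℝ (fun _ : Fin (D+1) => ℝ)).symm :
          (Fin (D+1) → ℝ) →L[ℝ] EuclideanSpace ℝ (Fin (D+1))).comp
        (ContinuousLinearMap.pi L)) p := by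
    exact (((PiLp.continuousLinearEquiv 2 ℝ (fun _ : Fin (D+1) => ℝ)).symm :
          (Fin (D+1) → ℝ) →L[ℝ] EuclideanSpace ℝ (Fin (D+1)))).hasFDerivAt.comp p hFpi
  rw [hF.fderiv]
  show (L i) v = _
  rw [hL]
  by_cases hi : i = Fin.last D
  · simp [hi]
  · simp only [if_neg hi]
    by_cases h0 : i = 0
    · subst h0
      simp [hpval, hi, PiLp.proj_apply, mul_comm, mul_left_comm]
    · simp [hpval, hi, h0, PiLp.proj_apply, mul_comm, mul_left_comm]


/-- At the cylinder point `(z, r) = ((1,0,…,0), r)`, with tangent frame `E` given by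
the standard basis vectors `e_2, …, e_{D+1}`, the ambient Jacobian `J` of `T_{c→s}`
satisfies `det((JE)ᵀ(JE)) = (1 − r²)^{D−2}`. -/
theorem cylToSphere_jacobian_det (D : ℕ) (hD : 2 ≤ D) (r : ℝ)
    (hr : r ∈ Ioo (-1 : ℝ) 1) :
    Matrix.det
      ((Matrix.of (fun (i : Fin (D + 1)) (j : Fin D) =>
          fderiv ℝ (cylToSphereAmbient D)
            (WithLp.toLp 2 ((fun i => if i = (0 : Fin (D + 1)) then (1 : ℝ)
                else if i = Fin.last D then r else 0) : Fin (D + 1) → ℝ))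
            (EuclideanSpace.single (Fin.succ j) (1 : ℝ)) i)).transpose
        * Matrix.of (fun (i : Fin (D + 1)) (j : Fin D) =>
          fderiv ℝ (cylToSphereAmbient D)
            (WithLp.toLp 2 ((fun i => if i = (0 : Fin (D + 1)) then (1 : ℝ)
                else if i = Fin.last D then r else 0) : Fin (D + 1) → ℝ))
            (EuclideanSpace.single (Fin.succ j) (1 : ℝ)) i))
      = (1 - r ^ 2) ^ (D - 2) := by
  obtain ⟨hr1, hr2⟩ := hr
  have hq : (0:ℝ) < 1 - r ^ 2 := by nlinarith
  have hqne : (1:ℝ) - r ^ 2 ≠ 0 := ne_of_gt hq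
  set s := Real.sqrt (1 - r ^ 2) with hs
  have hspos : 0 < s := Real.sqrt_pos.mpr hq
  have hsne : s ≠ 0 := ne_of_gt hspos
  have hs2 : s * s = 1 - r ^ 2 := Real.mul_self_sqrt hq.le
  set c := -(r / s) with hc
  have hlast0 : (Fin.last D) ≠ (0 : Fin (D+1)) := by
    simp [Fin.ext_iff]
    omega
  set A : Matrix (Fin (D+1)) (Fin D) ℝ := Matrix.of (fun i j =>
    if i = Fin.last D then (if j.succ = Fin.last D then (1:ℝ) else 0)
    else if i = 0 then (if j.succ = Fin.last D then c else 0)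
    else if i = j.succ then s else 0) with hA
  have hM : (Matrix.of (fun (i : Fin (D + 1)) (j : Fin D) =>
          fderiv ℝ (cylToSphereAmbient D)
            (WithLp.toLp 2 ((fun i => if i = (0 : Fin (D + 1)) then (1 : ℝ)
                else if i = Fin.last D then r else 0) : Fin (D + 1) → ℝ))
            (EuclideanSpace.single (Fin.succ j) (1 : ℝ)) i)) = A := by
    ext i j
    rw [Matrix.of_apply, cylToSphere_fderiv_apply D hD r ⟨hr1, hr2⟩, hA, Matrix.of_apply]
    have hsj : ∀ k : Fin (D+1),
        (EuclideanSpace.single (Fin.succ j) (1:ℝ)) k = if k = j.succ then 1 else 0 := by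
      intro k
      rw [EuclideanSpace.single_apply]
    by_cases hi : i = Fin.last D
    · rw [if_pos hi, if_pos hi, hsj]
      by_cases h : j.succ = Fin.last D
      · rw [if_pos h.symm, if_pos h]
      · rw [if_neg (fun hh => h hh.symm), if_neg h]
    · rw [if_neg hi, if_neg hi, hsj, hsj]
      by_cases h0 : i = 0
      · have h1 : i ≠ j.succ := fun hh => Fin.succ_ne_zero j (h0 ▸ hh).symm
        rw [if_neg h1, if_pos h0, if_pos h0]
        by_cases h : j.succ = Fin.last D
        · rw [if_pos h.symm, if_pos h]
          ring
        · rw [if_neg (fun hh => h hh.symm), if_neg h]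
          ring
      · simp only [if_neg h0]
        by_cases h : i = j.succ <;> simp [h, hs]
  rw [hM]
  have hD0 : D ≠ 0 := by omega
  have hd : A.transpose * A = Matrix.diagonal (fun j : Fin D =>
      if j.succ = Fin.last D then (1 - r ^ 2)⁻¹ else (1 - r ^ 2)) := by
    have hcc : c * c + 1 = (1 - r ^ 2)⁻¹ := by
      rw [hc]
      field_simp
      nlinarith [hs2]
    ext j j'
    rw [Matrix.mul_apply]
    simp only [Matrix.transpose_apply, hA, Matrix.of_apply, Matrix.diagonal_apply]
    by_cases hj : j.succ = Fin.last D <;> by_cases hj' : j'.succ = Fin.last D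
    · have hjj' : j = j' := Fin.succ_injective _ (hj.trans hj'.symm)
      subst hjj'
      rw [if_pos rfl]
      have hterm : ∀ i : Fin (D+1),
          ((if i = Fin.last D then (if j.succ = Fin.last D then (1:ℝ) else 0)
            else if i = 0 then (if j.succ = Fin.last D then c else 0)
            else if i = j.succ then s else 0) *
           (if i = Fin.last D then (if j.succ = Fin.last D then (1:ℝ) else 0)
            else if i = 0 then (if j.succ = Fin.last D then c else 0)
            else if i = j.succ then s else 0)) =
          (if i = Fin.last D then (1:ℝ) else 0) + (if i = 0 then c * c else 0) := by
        intro i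
        by_cases hi : i = Fin.last D
        · subst hi
          simp [hj, hlast0]
        · by_cases h0 : i = 0
          · subst h0
            simp [Ne.symm hlast0, hj]
          · have h1 : i ≠ j.succ := fun hh => hi (hh.trans hj)
            simp [hi, h0, h1]
      simp only [hterm]
      rw [Finset.sum_add_distrib, Finset.sum_ite_eq', Finset.sum_ite_eq', if_pos hj]
      simp only [Finset.mem_univ, if_pos]
      linarith [hcc]
    · have hne : j ≠ j' := fun h => hj' (h ▸ hj)
      rw [if_neg hne]
      apply Finset.sum_eq_zero
      intro i _
      by_cases hi : i = Fin.last D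
      · subst hi
        simp [hj, hj', hlast0]
      · by_cases h0 : i = 0
        · subst h0
          simp [Ne.symm hlast0, hj, hj', Ne.symm (Fin.succ_ne_zero j')]
        · have h1 : i ≠ j.succ := fun hh => hi (hh.trans hj)
          simp [hi, h0, h1]
    · have hne : j ≠ j' := fun h => hj (h ▸ hj')
      rw [if_neg hne]
      apply Finset.sum_eq_zero
      intro i _
      by_cases hi : i = Fin.last D
      · subst hi
        simp [hj, hj', hlast0]
      · by_cases h0 : i = 0
        · subst h0
          simp [Ne.symm hlast0, hj, hj', Ne.symm (Fin.succ_ne_zero j)]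
        · have h1 : i ≠ j'.succ := fun hh => hi (hh.trans hj')
          simp [hi, h0, h1]
    · have hterm : ∀ i : Fin (D+1),
          ((if i = Fin.last D then (if j.succ = Fin.last D then (1:ℝ) else 0)
            else if i = 0 then (if j.succ = Fin.last D then c else 0)
            else if i = j.succ then s else 0) *
           (if i = Fin.last D then (if j'.succ = Fin.last D then (1:ℝ) else 0)
            else if i = 0 then (if j'.succ = Fin.last D then c else 0)
            else if i = j'.succ then s else 0)) =
          (if i = j.succ then (if i = j'.succ then s * s else 0) else 0) := by
        intro i
        by_cases hi : i = Fin.last D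
        · subst hi
          have h1 : Fin.last D ≠ j.succ := fun hh => hj hh.symm
          simp [hj, hj', h1]
        · by_cases h0 : i = 0
          · subst h0
            simp [Ne.symm hlast0, hj, hj', Ne.symm (Fin.succ_ne_zero j)]
          · simp only [if_neg hi, if_neg h0]
            by_cases h1 : i = j.succ <;> by_cases h2 : i = j'.succ <;> simp [h1, h2]
      simp only [hterm]
      rw [Finset.sum_ite_eq' Finset.univ (j.succ) (fun i => if i = j'.succ then s * s else 0)]
      simp only [Finset.mem_univ, if_pos]
      by_cases h : j = j'
      · subst h
        simp [hj, hs2]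
      · have h2 : j.succ ≠ j'.succ := fun hh => h (Fin.succ_injective _ hh)
        simp [h, h2]
  rw [hd, Matrix.det_diagonal]
  set a : Fin D := ⟨D - 1, by omega⟩ with ha
  have hsucc_last : ∀ j : Fin D, (j.succ = Fin.last D) ↔ j = a := by
    intro j
    rw [Fin.ext_iff, Fin.ext_iff]
    simp [ha]
    omega
  have hpow : (1 - r ^ 2) ^ (D - 1) = (1 - r ^ 2) ^ (D - 2) * (1 - r ^ 2) := by
    rw [← pow_succ]
    congr 1
    omega
  calc (∏ j : Fin D, if j.succ = Fin.last D then (1 - r ^ 2)⁻¹ else (1 - r ^ 2))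
      = ∏ j : Fin D, (if j = a then (1 - r ^ 2)⁻¹ else (1 - r ^ 2)) := by
        simp only [hsucc_last]
    _ = (1 - r ^ 2)⁻¹ *
        ∏ j ∈ Finset.univ.erase a, (if j = a then (1 - r ^ 2)⁻¹ else (1 - r ^ 2)) := by
        rw [← Finset.mul_prod_erase Finset.univ _ (Finset.mem_univ a), if_pos rfl]
    _ = (1 - r ^ 2)⁻¹ * (1 - r ^ 2) ^ (D - 1) := by
        rw [Finset.prod_congr rfl fun j hj => if_neg (Finset.ne_of_mem_erase hj),
          Finset.prod_const, Finset.card_erase_of_mem (Finset.mem_univ a),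
          Finset.card_univ, Fintype.card_fin]
    _ = (1 - r ^ 2) ^ (D - 2) := by
        rw [hpow, mul_comm ((1 - r ^ 2) ^ (D - 2)) (1 - r ^ 2), ← mul_assoc,
          inv_mul_cancel₀ hqne, one_mul]
end

section
/- Let z = e^{iθ} with θ ∈ (−π, π), α > 0, and a = (1−α)/(1+α). Then the complex number v = (e^{iθ} + a)/(1 + a·e^{iθ}) satisfies Im(v)/Re(v) = 2α·tan(θ/2) / (1 − α²·tan²(θ/2)) whenever Re(v) ≠ 0 and cos(θ/2) ≠ 0. -/
open Real Set Complex

/-- Key computational identity for the Möbius/NCP equivalence: for `θ ∈ (−π, π)`,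
`α > 0` and `a = (1−α)/(1+α)`, the complex number
`v = (e^{iθ} + a)/(1 + a e^{iθ})` satisfies
`Im(v)/Re(v) = 2α tan(θ/2)/(1 − α² tan²(θ/2))` whenever `Re(v) ≠ 0` and
`cos(θ/2) ≠ 0`. -/
theorem mobius_ncp_tangent_identity (α θ : ℝ) (hα : 0 < α)
    (hθ : θ ∈ Ioo (-π) π)
    (hre : ((Complex.exp (Complex.I * (θ : ℂ)) + (((1 - α) / (1 + α) : ℝ) : ℂ))
        / (1 + (((1 - α) / (1 + α) : ℝ) : ℂ) * Complex.exp (Complex.I * (θ : ℂ)))).re ≠ 0)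
    (hcos : Real.cos (θ / 2) ≠ 0) :
    ((Complex.exp (Complex.I * (θ : ℂ)) + (((1 - α) / (1 + α) : ℝ) : ℂ))
        / (1 + (((1 - α) / (1 + α) : ℝ) : ℂ) * Complex.exp (Complex.I * (θ : ℂ)))).im
      / ((Complex.exp (Complex.I * (θ : ℂ)) + (((1 - α) / (1 + α) : ℝ) : ℂ))
        / (1 + (((1 - α) / (1 + α) : ℝ) : ℂ) * Complex.exp (Complex.I * (θ : ℂ)))).re
      = 2 * α * Real.tan (θ / 2) / (1 - α ^ 2 * Real.tan (θ / 2) ^ 2) := by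
  have h1α : (1 : ℝ) + α ≠ 0 := by positivity
  set a : ℝ := (1 - α) / (1 + α) with ha
  set A : ℝ := Real.cos θ with hAdef
  set B : ℝ := Real.sin θ with hBdef
  set s : ℝ := Real.sin (θ / 2) with hsdef
  set c : ℝ := Real.cos (θ / 2) with hcdef
  have hpyth : s ^ 2 + c ^ 2 = 1 := Real.sin_sq_add_cos_sq (θ / 2)
  have hA : A = 2 * c ^ 2 - 1 := by
    have h := Real.cos_two_mul (θ / 2)
    rw [show 2 * (θ / 2) = θ by ring] at h
    rw [hAdef, hcdef, h]
  have hB : B = 2 * s * c := by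
    have h := Real.sin_two_mul (θ / 2)
    rw [show 2 * (θ / 2) = θ by ring] at h
    rw [hBdef, hsdef, hcdef, h]
  clear_value a A B s c
  have hexp : Complex.exp (Complex.I * (θ : ℂ)) = (A : ℂ) + (B : ℂ) * Complex.I := by
    rw [mul_comm, Complex.exp_mul_I, hAdef, hBdef, Complex.ofReal_cos, Complex.ofReal_sin]
  rw [hexp] at hre ⊢
  by_cases hD : (1 + (a : ℂ) * ((A : ℂ) + (B : ℂ) * Complex.I)) = 0
  · rw [hD, div_zero] at hre; simp at hre
  set Q : ℝ := (1 + a * A) ^ 2 + (a * B) ^ 2 with hQdef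
  clear_value Q
  have hQ : Q ≠ 0 := by
    have h := Complex.normSq_pos.mpr hD
    simp only [Complex.normSq_apply, Complex.add_re, Complex.add_im, Complex.one_re,
      Complex.one_im, Complex.mul_re, Complex.mul_im, Complex.ofReal_re, Complex.ofReal_im,
      Complex.I_re, Complex.I_im] at h
    intro hz; rw [hQdef] at hz; nlinarith [h]
  have hre' : (((A : ℂ) + (B : ℂ) * Complex.I + (a : ℂ))
      / (1 + (a : ℂ) * ((A : ℂ) + (B : ℂ) * Complex.I))).re
      = (A * (1 + a ^ 2) + 2 * a) / Q := by
    rw [Complex.div_re]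
    simp only [Complex.normSq_apply, Complex.add_re, Complex.add_im, Complex.one_re,
      Complex.one_im, Complex.mul_re, Complex.mul_im, Complex.ofReal_re, Complex.ofReal_im,
      Complex.I_re, Complex.I_im, hQdef]
    have hAB : A ^ 2 + B ^ 2 = 1 := by rw [hAdef, hBdef]; exact Real.cos_sq_add_sin_sq θ
    linear_combination (a * (1 + A * a * 2 + A ^ 2 * a ^ 2 + B ^ 2 * a ^ 2)⁻¹) * hAB
  have him' : (((A : ℂ) + (B : ℂ) * Complex.I + (a : ℂ))
      / (1 + (a : ℂ) * ((A : ℂ) + (B : ℂ) * Complex.I))).im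
      = (B * (1 - a ^ 2)) / Q := by
    rw [Complex.div_im]
    simp only [Complex.normSq_apply, Complex.add_re, Complex.add_im, Complex.one_re,
      Complex.one_im, Complex.mul_re, Complex.mul_im, Complex.ofReal_re, Complex.ofReal_im,
      Complex.I_re, Complex.I_im, hQdef]
    ring
  rw [hre'] at hre
  rw [hre', him']
  set N : ℝ := A * (1 + a ^ 2) + 2 * a with hNdef
  clear_value N
  have hN : N ≠ 0 := by
    intro h; rw [h, zero_div] at hre; exact hre rfl
  have key1 : N * (1 + α) ^ 2 = 4 * (c ^ 2 - α ^ 2 * s ^ 2) := by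
    rw [hNdef, hA, ha]
    field_simp
    linear_combination (4 * α ^ 2) * hpyth
  have hk : c ^ 2 - α ^ 2 * s ^ 2 ≠ 0 := by
    intro h
    apply hN
    rw [h, mul_zero] at key1
    exact (mul_eq_zero.mp key1).resolve_right (pow_ne_zero _ h1α)
  have hden : 1 - α ^ 2 * Real.tan (θ / 2) ^ 2 ≠ 0 := by
    rw [Real.tan_eq_sin_div_cos, ← hsdef, ← hcdef]
    intro h
    apply hk
    field_simp at h
    linarith
  rw [Real.tan_eq_sin_div_cos, ← hsdef, ← hcdef, hB]
  have step : 2 * s * c * (1 - a ^ 2) / Q / (N / Q) = 2 * s * c * (1 - a ^ 2) / N := by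
    rw [div_div_div_cancel_right₀ hQ]
  rw [step]
  rw [div_eq_div_iff hN (by rw [Real.tan_eq_sin_div_cos, ← hsdef, ← hcdef] at hden; exact hden)]
  rw [ha]
  field_simp
  linear_combination (-(s*α)) * key1
end

section
/- Let ω ∈ ℝ^{D+1} with ‖ω‖ < 1 and h_ω(z) = ((1−‖ω‖²)/‖z−ω‖²)(z−ω) − ω on S^D. Then h_ω ∘ h_{-ω}(z) = z for all z ∈ S^D, so h_{-ω} is the inverse of h_ω on S^D. -/
open Real

/-- The Möbius transformation with centre `ω` in the open unit ball of `ℝ^{D+1}`. -/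
noncomputable def mobius {D : ℕ} (ω z : EuclideanSpace ℝ (Fin (D + 1))) :
    EuclideanSpace ℝ (Fin (D + 1)) :=
  ((1 - ‖ω‖ ^ 2) / ‖z - ω‖ ^ 2) • (z - ω) - ω

/-- On the unit sphere `S^D`, `h_ω ∘ h_{−ω} = id`, so `h_{−ω}` is the inverse of
`h_ω`. -/
theorem mobius_comp_neg_eq_id (D : ℕ)
    (ω : EuclideanSpace ℝ (Fin (D + 1))) (hω : ‖ω‖ < 1) :
    ∀ z : EuclideanSpace ℝ (Fin (D + 1)), ‖z‖ = 1 →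
      mobius ω (mobius (-ω) z) = z := by
  intro z hz
  have hne : z + ω ≠ 0 := by
    intro h
    have hz' : z = -ω := eq_neg_of_add_eq_zero_left h
    rw [hz', norm_neg] at hz
    linarith
  have hw2 : (0:ℝ) < ‖z + ω‖ ^ 2 := pow_pos (norm_pos_iff.2 hne) 2
  have ha : (0:ℝ) < 1 - ‖ω‖ ^ 2 := by nlinarith [norm_nonneg ω]
  set c : ℝ := (1 - ‖ω‖ ^ 2) / ‖z + ω‖ ^ 2 with hc
  have hcpos : 0 < c := div_pos ha hw2
  simp only [mobius, norm_neg, sub_neg_eq_add, ← hc]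
  have h1 : c • (z + ω) + ω - ω = c • (z + ω) := add_sub_cancel_right _ _
  rw [h1, norm_smul, Real.norm_eq_abs, abs_of_pos hcpos, smul_smul]
  have hscal : (1 - ‖ω‖ ^ 2) / (c * ‖z + ω‖) ^ 2 * c = 1 := by
    have e : (c * ‖z + ω‖) ^ 2 = c ^ 2 * ‖z + ω‖ ^ 2 := by ring
    rw [e, hc]
    field_simp
  rw [hscal, one_smul, add_sub_cancel_right]
end
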